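/- arXiv:2208.06550 — 4 statements merged into one kernel-verified Lean document; each statement's English description precedes it below -/
import Mathlib

section
/- For every two positive integers ν and Δ, if G is a simple graph with matching number at most ν and maximum degree at most Δ, then the number of edges of G is at most Δ·ν + ⌊Δ/2⌋·⌊ν/⌈Δ/2⌉⌋, and in particular at most Δ·ν + ν. -/
/-!
Induction on the number of edges. If some vertex `v` is covered by every maximum matching,
deleting the edges at `v` loses at most `Δ` edges and lowers `ν` by one. Otherwise, by Gallai's
lemma, a maximum matching `M` misses at most one vertex of each component, so a component `C`
containing an edge has at most `2m + 1` vertices, where `m` edges of `M` lie in `C`. Hence `C`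
spans at most `min (Δ (2m + 1) / 2) (m (2m + 1))` edges: at most `Δ m` when `m < ⌈Δ/2⌉`, and at
most `Δ m + ⌊Δ/2⌋` otherwise, in which case deleting `C` (which lowers `ν` by at least `m`) also
lowers `⌊ν / ⌈Δ/2⌉⌋` by at least one.
-/

/-- `M` is a matching in `G`: a set of edges of `G` that are pairwise vertex-disjoint. -/
def IsMatchingSet {V : Type*} (G : SimpleGraph V) (M : Finset (Sym2 V)) : Prop :=
  (↑M : Set (Sym2 V)) ⊆ G.edgeSet ∧
    ∀ e ∈ M, ∀ f ∈ M, e ≠ f → ∀ v : V, v ∈ e → v ∉ f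

open Finset SimpleGraph

section Matching

variable {V : Type*} {G H : SimpleGraph V} {M N : Finset (Sym2 V)} {e f : Sym2 V} {u v w : V}

lemma isMatchingSet_empty : IsMatchingSet G ∅ := by
  simp [IsMatchingSet]

namespace IsMatchingSet

lemma mono (hGH : G ≤ H) (hM : IsMatchingSet G M) : IsMatchingSet H M :=
  ⟨hM.1.trans (edgeSet_mono hGH), hM.2⟩

lemma subset (hM : IsMatchingSet G M) (hNM : N ⊆ M) : IsMatchingSet G N :=
  ⟨(coe_subset.2 hNM).trans hM.1, fun e he f hf ↦ hM.2 e (hNM he) f (hNM hf)⟩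

lemma eq_of_mem (hM : IsMatchingSet G M) (he : e ∈ M) (hf : f ∈ M) (hve : v ∈ e)
    (hvf : v ∈ f) : e = f :=
  by_contra fun hef ↦ hM.2 e he f hf hef v hve hvf

lemma not_isDiag (hM : IsMatchingSet G M) (he : e ∈ M) : ¬ e.IsDiag :=
  G.not_isDiag_of_mem_edgeSet (hM.1 he)

end IsMatchingSet

def IsMaximumMatchingSet (G : SimpleGraph V) (M : Finset (Sym2 V)) : Prop :=
  IsMatchingSet G M ∧ ∀ N, IsMatchingSet G N → #N ≤ #M

lemma exists_isMaximumMatchingSet [Finite V] (G : SimpleGraph V) :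
    ∃ M, IsMaximumMatchingSet G M := by
  obtain ⟨M, hM, hmax⟩ := Set.exists_max_image {M | IsMatchingSet G M} card (Set.toFinite _)
    ⟨∅, isMatchingSet_empty⟩
  exact ⟨M, hM, hmax⟩

lemma IsMaximumMatchingSet.card_eq (hM : IsMaximumMatchingSet G M)
    (hN : IsMaximumMatchingSet G N) : #M = #N :=
  le_antisymm (hN.2 M hM.1) (hM.2 N hN.1)

variable [DecidableEq V]

def vertexSupport (M : Finset (Sym2 V)) : Finset V := M.biUnion Sym2.toFinset

@[simp]
lemma mem_vertexSupport : v ∈ vertexSupport M ↔ ∃ e ∈ M, v ∈ e := by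
  simp [vertexSupport]

lemma disjoint_of_disjoint_vertexSupport
    (hMN : Disjoint (vertexSupport M) (vertexSupport N)) : Disjoint M N :=
  Finset.disjoint_left.2 fun e heM heN ↦ Finset.disjoint_left.1 hMN
    (mem_vertexSupport.2 ⟨e, heM, e.out_fst_mem⟩) (mem_vertexSupport.2 ⟨e, heN, e.out_fst_mem⟩)

namespace IsMatchingSet

lemma card_vertexSupport (hM : IsMatchingSet G M) : #(vertexSupport M) = 2 * #M := by
  rw [vertexSupport, card_biUnion, sum_congr rfl fun e he ↦
    Sym2.card_toFinset_of_not_isDiag e (hM.not_isDiag he), sum_const, smul_eq_mul, mul_comm]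
  intro e he f hf hef
  simp only [Function.onFun, Finset.disjoint_left, Sym2.mem_toFinset]
  exact hM.2 e he f hf hef

lemma union (hM : IsMatchingSet G M) (hN : IsMatchingSet G N)
    (hMN : Disjoint (vertexSupport M) (vertexSupport N)) : IsMatchingSet G (M ∪ N) := by
  refine ⟨by simpa using And.intro hM.1 hN.1, fun e he f hf hef v hve hvf ↦ ?_⟩
  have hsupp {K : Finset (Sym2 V)} {g : Sym2 V} (hg : g ∈ K) (hv : v ∈ g) :
      v ∈ vertexSupport K := mem_vertexSupport.2 ⟨g, hg, hv⟩
  rcases mem_union.1 he with he | he <;> rcases mem_union.1 hf with hf | hf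
  · exact hM.2 e he f hf hef v hve hvf
  · exact Finset.disjoint_left.1 hMN (hsupp he hve) (hsupp hf hvf)
  · exact Finset.disjoint_left.1 hMN (hsupp hf hvf) (hsupp he hve)
  · exact hN.2 e he f hf hef v hve hvf

lemma insert (hM : IsMatchingSet G M) (he : e ∈ G.edgeSet)
    (heM : ∀ v ∈ e, v ∉ vertexSupport M) : IsMatchingSet G (insert e M) := by
  rw [insert_eq]
  refine IsMatchingSet.union ⟨by simpa using he, by simp⟩ hM ?_
  simpa [Finset.disjoint_left] using heM

end IsMatchingSet

namespace IsMaximumMatchingSet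

lemma not_adj (hM : IsMaximumMatchingSet G M) (hu : u ∉ vertexSupport M)
    (hv : v ∉ vertexSupport M) : ¬ G.Adj u v := by
  intro huv
  have hnew : s(u, v) ∉ M := fun h ↦ hu (mem_vertexSupport.2 ⟨_, h, Sym2.mem_mk_left u v⟩)
  have := hM.2 _ (hM.1.insert (G.mem_edgeSet.2 huv) fun w hw ↦ by
    rcases Sym2.mem_iff.1 hw with rfl | rfl <;> assumption)
  rw [card_insert_of_notMem hnew] at this
  omega

/-- If `xy ∈ M` and `N` misses `x`, then `N` covers `y`, and trading the edge of `N` at `y`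
for `xy` keeps `N` maximum. -/
lemma exists_exchange (hN : IsMaximumMatchingSet G N) (hM : IsMatchingSet G M)
    {x : V} (hxM : x ∈ vertexSupport M) (hxN : x ∉ vertexSupport N) :
    ∃ N', IsMaximumMatchingSet G N' ∧ vertexSupport N' ⊆ insert x (vertexSupport N) ∧
      #(N ∩ M) < #(N' ∩ M) := by
  obtain ⟨e, heM, hxe⟩ := mem_vertexSupport.1 hxM
  obtain ⟨y, rfl⟩ := Sym2.mem_iff_exists.1 hxe
  have heN : s(x, y) ∉ N := fun h ↦ hxN (mem_vertexSupport.2 ⟨_, h, hxe⟩)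
  have hyN : y ∈ vertexSupport N := by
    by_contra hyN
    exact hN.not_adj hxN hyN (hM.1 heM)
  obtain ⟨f, hfN, hyf⟩ := mem_vertexSupport.1 hyN
  have hfM : f ∉ M := fun h ↦ heN (hM.eq_of_mem heM h (Sym2.mem_mk_right x y) hyf ▸ hfN)
  set N' := insert s(x, y) (N.erase f)
  have hN'match : IsMatchingSet G N' := by
    refine (hN.1.subset (erase_subset f N)).insert (hM.1 heM) fun v hv hvN ↦ ?_
    obtain ⟨g, hg, hvg⟩ := mem_vertexSupport.1 hvN
    rcases Sym2.mem_iff.1 hv with rfl | rfl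
    · exact hxN (mem_vertexSupport.2 ⟨g, mem_of_mem_erase hg, hvg⟩)
    · exact ne_of_mem_erase hg (hN.1.eq_of_mem (mem_of_mem_erase hg) hfN hvg hyf)
  have hcard : #N' = #N := by
    rw [card_insert_of_notMem fun h ↦ heN (mem_of_mem_erase h), card_erase_of_mem hfN]
    have := card_pos.2 ⟨f, hfN⟩
    omega
  refine ⟨N', ⟨hN'match, fun K hK ↦ hcard ▸ hN.2 K hK⟩, fun v hv ↦ ?_, card_lt_card ?_⟩
  · obtain ⟨g, hg, hvg⟩ := mem_vertexSupport.1 hv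
    rcases mem_insert.1 hg with rfl | hg
    · rcases Sym2.mem_iff.1 hvg with rfl | rfl
      · exact mem_insert_self _ _
      · exact mem_insert_of_mem hyN
    · exact mem_insert_of_mem (mem_vertexSupport.2 ⟨g, mem_of_mem_erase hg, hvg⟩)
  · refine ssubset_iff_of_subset (fun g hg ↦ ?_) |>.2 ⟨s(x, y), ?_, ?_⟩
    · obtain ⟨hgN, hgM⟩ := mem_inter.1 hg
      exact mem_inter.2 ⟨mem_insert_of_mem (mem_erase.2 ⟨fun h ↦ hfM (h ▸ hgM), hgN⟩), hgM⟩
    · exact mem_inter.2 ⟨mem_insert_self _ _, heM⟩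
    · exact fun h ↦ heN (mem_inter.1 h).1

/-- Gallai's lemma. For a counterexample with `u`, `w` at minimal distance, let `z` be the
neighbour of `u` on a shortest path and `N` a maximum matching missing `z` with `#(N ∩ M)`
maximal. By minimality `N` covers `u` and `w`, so `M` covers a vertex `x ≠ z` that `N` misses,
and an exchange at `x` contradicts the choice of `N`. -/
theorem not_reachable [Finite V]
    (hcrit : ∀ v, ∃ N, IsMaximumMatchingSet G N ∧ v ∉ vertexSupport N)
    (hM : IsMaximumMatchingSet G M) (hu : u ∉ vertexSupport M) (hw : w ∉ vertexSupport M)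
    (huw : u ≠ w) : ¬ G.Reachable u w := by
  induction hd : G.dist u w using Nat.strong_induction_on generalizing M u w with
  | _ d ih =>
  intro hr
  obtain ⟨p, hp⟩ := hr.exists_walk_length_eq_dist
  cases p with
  | nil => exact huw rfl
  | @cons _ z _ huz q =>
  have hzw : G.dist z w < d := (dist_le q).trans_lt (by rw [Walk.length_cons] at hp; omega)
  have hzw_ne : z ≠ w := by
    rintro rfl
    exact hM.not_adj hu hw huz
  have hzM : z ∈ vertexSupport M := by
    by_contra hzM
    exact ih _ hzw hM hzM hw hzw_ne rfl ⟨q⟩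
  obtain ⟨N, ⟨hN, hzN⟩, hNmax⟩ := Set.exists_max_image
    {N | IsMaximumMatchingSet G N ∧ z ∉ vertexSupport N} (fun N ↦ #(N ∩ M))
    (Set.toFinite _) (hcrit z)
  have huN : u ∈ vertexSupport N := by
    by_contra huN
    exact hN.not_adj huN hzN huz
  have hwN : w ∈ vertexSupport N := by
    by_contra hwN
    exact ih _ hzw hN hzN hwN hzw_ne rfl ⟨q⟩
  have hsdiff : 1 < #(vertexSupport M \ vertexSupport N) := by
    rw [card_sdiff_comm (by rw [hM.1.card_vertexSupport, hN.1.card_vertexSupport, hM.card_eq hN])]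
    exact one_lt_card.2 ⟨u, mem_sdiff.2 ⟨huN, hu⟩, w, mem_sdiff.2 ⟨hwN, hw⟩, huw⟩
  obtain ⟨x, hx, hxz⟩ := exists_mem_ne hsdiff z
  obtain ⟨N', hN', hN'supp, hlt⟩ :=
    hN.exists_exchange hM.1 (mem_sdiff.1 hx).1 (mem_sdiff.1 hx).2
  have hzN' : z ∉ vertexSupport N' := fun h ↦ by
    rcases mem_insert.1 (hN'supp h) with h | h
    exacts [hxz h.symm, hzN h]
  exact (hNmax N' ⟨hN', hzN'⟩).not_gt hlt

lemma card_lt_of_deleteIncidenceSet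
    (hv : ∀ N, IsMaximumMatchingSet G N → v ∈ vertexSupport N) (hM : IsMaximumMatchingSet G M)
    (hN : IsMaximumMatchingSet (G.deleteIncidenceSet v) N) : #N < #M := by
  have hNG : IsMatchingSet G N := hN.1.mono (G.deleteIncidenceSet_le v)
  refine (hM.2 N hNG).lt_of_ne fun hNM ↦ ?_
  obtain ⟨e, he, hve⟩ := mem_vertexSupport.1 (hv N ⟨hNG, fun K hK ↦ hNM ▸ hM.2 K hK⟩)
  have := hN.1.1 he
  rw [edgeSet_deleteIncidenceSet] at this
  exact this.2 ⟨this.1, hve⟩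

lemma card_le_two_mul_card_inter_sym2_add_one [Finite V]
    (hcrit : ∀ v, ∃ N, IsMaximumMatchingSet G N ∧ v ∉ vertexSupport N)
    (hM : IsMaximumMatchingSet G M) {C : Finset V}
    (hC : ∀ x ∈ C, ∀ y ∈ C, G.Reachable x y) (hCadj : ∀ x y, G.Adj x y → x ∈ C → y ∈ C) :
    #C ≤ 2 * #(M ∩ C.sym2) + 1 := by
  have hmissed : #(C \ vertexSupport M) ≤ 1 := card_le_one.2 fun x hx y hy ↦ by
    rw [mem_sdiff] at hx hy
    by_contra hxy
    exact hM.not_reachable hcrit hx.2 hy.2 hxy (hC x hx.1 y hy.1)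
  have hcovered : C ∩ vertexSupport M ⊆ vertexSupport (M ∩ C.sym2) := fun x hx ↦ by
    obtain ⟨hxC, hxM⟩ := mem_inter.1 hx
    obtain ⟨e, he, hxe⟩ := mem_vertexSupport.1 hxM
    obtain ⟨y, rfl⟩ := Sym2.mem_iff_exists.1 hxe
    refine mem_vertexSupport.2 ⟨_, mem_inter.2 ⟨he, mem_sym2_iff.2 fun z hz ↦ ?_⟩, hxe⟩
    rcases Sym2.mem_iff.1 hz with rfl | rfl
    exacts [hxC, hCadj x z (hM.1.1 he) hxC]
  calc #C = #(C ∩ vertexSupport M) + #(C \ vertexSupport M) :=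
        (card_inter_add_card_sdiff C _).symm
    _ ≤ #(vertexSupport (M ∩ C.sym2)) + 1 := add_le_add (card_le_card hcovered) hmissed
    _ = 2 * #(M ∩ C.sym2) + 1 := by
        rw [(hM.1.subset inter_subset_left).card_vertexSupport]

lemma card_add_card_inter_sym2_le (hM : IsMaximumMatchingSet G M)
    (hN : IsMatchingSet G N) {C : Finset V} (hNC : ∀ e ∈ N, ∀ x ∈ e, x ∉ C) :
    #N + #(M ∩ C.sym2) ≤ #M := by
  have hdisj : Disjoint (vertexSupport N) (vertexSupport (M ∩ C.sym2)) := by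
    refine Finset.disjoint_left.2 fun x hxN hxC ↦ ?_
    obtain ⟨e, he, hxe⟩ := mem_vertexSupport.1 hxN
    obtain ⟨f, hf, hxf⟩ := mem_vertexSupport.1 hxC
    exact hNC e he x hxe (mem_sym2_iff.1 (mem_inter.1 hf).2 x hxf)
  rw [← card_union_of_disjoint (disjoint_of_disjoint_vertexSupport hdisj)]
  exact hM.2 _ (hN.union (hM.1.subset inter_subset_left) hdisj)

end IsMaximumMatchingSet

end Matching

def chvatalHansonBound (Δ ν : ℕ) : ℕ := Δ * ν + Δ / 2 * (ν / ((Δ + 1) / 2))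

lemma chvatalHansonBound_mono (Δ : ℕ) : Monotone (chvatalHansonBound Δ) := fun _ _ h ↦
  add_le_add (Nat.mul_le_mul_left Δ h) (Nat.mul_le_mul_left _ (Nat.div_le_div_right h))

lemma chvatalHansonBound_le (Δ ν : ℕ) : chvatalHansonBound Δ ν ≤ Δ * ν + ν := by
  have : Δ / 2 * (ν / ((Δ + 1) / 2)) ≤ ν := calc
    _ ≤ (Δ + 1) / 2 * (ν / ((Δ + 1) / 2)) := Nat.mul_le_mul_right _ (by omega)
    _ ≤ ν := Nat.mul_div_le ν _
  exact Nat.add_le_add_left this _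

lemma chvatalHansonBound_add_le (Δ ν : ℕ) :
    chvatalHansonBound Δ ν + Δ ≤ chvatalHansonBound Δ (ν + 1) := by
  unfold chvatalHansonBound
  rw [Nat.mul_succ]
  have : ν / ((Δ + 1) / 2) ≤ (ν + 1) / ((Δ + 1) / 2) := Nat.div_le_div_right (by omega)
  have := Nat.mul_le_mul_left (Δ / 2) this
  omega

lemma add_chvatalHansonBound_le {Δ ν m c e : ℕ} (hc : c ≤ 2 * m + 1) (hΔ : 2 * e ≤ c * Δ)
    (hcc : 2 * e ≤ c * (c - 1)) : e + chvatalHansonBound Δ ν ≤ chvatalHansonBound Δ (ν + m) := by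
  unfold chvatalHansonBound
  rw [Nat.mul_add]
  set k := (Δ + 1) / 2
  rcases lt_or_ge m k with hmk | hkm
  · have h2m : 2 * m + 1 ≤ Δ := by omega
    have he : e ≤ Δ * m := by
      have : c * (c - 1) ≤ (2 * m + 1) * (2 * m) := Nat.mul_le_mul hc (by omega)
      nlinarith
    have := Nat.mul_le_mul_left (Δ / 2) (Nat.div_le_div_right (c := k) (Nat.le_add_right ν m))
    omega
  · have he : e ≤ Δ * m + Δ / 2 := by
      have : c * Δ ≤ (2 * m + 1) * Δ := Nat.mul_le_mul_right Δ hc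
      have : (2 * m + 1) * Δ = 2 * (Δ * m) + Δ := by ring
      omega
    rcases Nat.eq_zero_or_pos k with hk | hk
    · obtain rfl : Δ = 0 := by omega
      simp only [zero_mul, Nat.zero_div, add_zero, nonpos_iff_eq_zero] at he ⊢
      omega
    · have : ν / k + 1 ≤ (ν + m) / k := by
        rw [← Nat.add_div_right ν hk]
        exact Nat.div_le_div_right (by omega)
      have := Nat.mul_le_mul_left (Δ / 2) this
      rw [Nat.mul_succ] at this
      omega

section EdgeCount

variable {V : Type*} [Fintype V] {G H : SimpleGraph V} [DecidableRel H.Adj] {C : Finset V}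

lemma degree_le_card_sub_one_of_adj_mem [DecidableEq V] (hHC : ∀ x y, H.Adj x y → x ∈ C)
    {x : V} (hx : x ∈ C) : H.degree x ≤ #C - 1 := by
  rw [← card_erase_of_mem hx]
  refine card_le_card fun y hy ↦ ?_
  rw [mem_neighborFinset] at hy
  exact mem_erase.2 ⟨hy.ne.symm, hHC y x hy.symm⟩

lemma two_mul_card_edgeFinset_le_of_adj_mem (hHC : ∀ x y, H.Adj x y → x ∈ C) {D : ℕ}
    (hD : ∀ x ∈ C, H.degree x ≤ D) : 2 * #H.edgeFinset ≤ #C * D := by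
  rw [← sum_degrees_eq_twice_card_edges, ← sum_subset (subset_univ C) fun x _ hx ↦ ?_]
  · simpa using sum_le_sum hD
  · exact (degree_eq_zero_iff_notMem_support _ _).2 fun ⟨y, hxy⟩ ↦ hx (hHC x y hxy)

lemma card_edgeFinset_sdiff_add_card_edgeFinset [DecidableEq V] [DecidableRel G.Adj]
    (hHG : H ≤ G) : #(G \ H).edgeFinset + #H.edgeFinset = #G.edgeFinset := by
  rw [edgeFinset_sdiff, card_sdiff_of_subset (edgeFinset_mono hHG),
    Nat.sub_add_cancel (card_le_card (edgeFinset_mono hHG))]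

variable [DecidableEq V] [DecidableRel G.Adj] {M N : Finset (Sym2 V)} {Δ : ℕ}

lemma IsMaximumMatchingSet.degree_add_chvatalHansonBound_le {v : V}
    (hv : ∀ N, IsMaximumMatchingSet G N → v ∈ vertexSupport N) (hdeg : G.degree v ≤ Δ)
    (hM : IsMaximumMatchingSet G M) (hN : IsMaximumMatchingSet (G.deleteIncidenceSet v) N) :
    G.degree v + chvatalHansonBound Δ #N ≤ chvatalHansonBound Δ #M :=
  calc G.degree v + chvatalHansonBound Δ #N ≤ chvatalHansonBound Δ #N + Δ := by omega
    _ ≤ chvatalHansonBound Δ (#N + 1) := chvatalHansonBound_add_le Δ #N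
    _ ≤ chvatalHansonBound Δ #M :=
      chvatalHansonBound_mono Δ (hM.card_lt_of_deleteIncidenceSet hv hN)

lemma IsMaximumMatchingSet.card_edgeFinset_add_chvatalHansonBound_le
    (hcrit : ∀ v, ∃ N, IsMaximumMatchingSet G N ∧ v ∉ vertexSupport N)
    (hdeg : ∀ v, G.degree v ≤ Δ) (hM : IsMaximumMatchingSet G M)
    (hC : ∀ x ∈ C, ∀ y ∈ C, G.Reachable x y) (hCadj : ∀ x y, G.Adj x y → x ∈ C → y ∈ C)
    (hH : ∀ x y, H.Adj x y ↔ G.Adj x y ∧ x ∈ C ∧ y ∈ C) (hN : IsMaximumMatchingSet (G \ H) N) :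
    #H.edgeFinset + chvatalHansonBound Δ #N ≤ chvatalHansonBound Δ #M := by
  have hHC (x y : V) (hxy : H.Adj x y) : x ∈ C := ((hH x y).1 hxy).2.1
  have hNC : ∀ e ∈ N, ∀ x ∈ e, x ∉ C := by
    intro e he x hxe hxC
    obtain ⟨y, rfl⟩ := Sym2.mem_iff_exists.1 hxe
    have hxy : (G \ H).Adj x y := hN.1.1 he
    rw [sdiff_adj, hH] at hxy
    exact hxy.2 ⟨hxy.1, hxC, hCadj x y hxy.1 hxC⟩
  calc #H.edgeFinset + chvatalHansonBound Δ #N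
      ≤ chvatalHansonBound Δ (#N + #(M ∩ C.sym2)) :=
        add_chvatalHansonBound_le (hM.card_le_two_mul_card_inter_sym2_add_one hcrit hC hCadj)
          (two_mul_card_edgeFinset_le_of_adj_mem hHC fun x _ ↦
            (degree_le_of_le fun _ _ h ↦ ((hH _ _).1 h).1).trans (hdeg x))
          (two_mul_card_edgeFinset_le_of_adj_mem hHC fun x hx ↦
            degree_le_card_sub_one_of_adj_mem hHC hx)
    _ ≤ chvatalHansonBound Δ #M :=
      chvatalHansonBound_mono Δ (hM.card_add_card_inter_sym2_le (hN.1.mono sdiff_le) hNC)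

theorem IsMaximumMatchingSet.card_edgeFinset_le_chvatalHansonBound
    (hdeg : ∀ v, G.degree v ≤ Δ) (hM : IsMaximumMatchingSet G M) :
    #G.edgeFinset ≤ chvatalHansonBound Δ #M := by
  classical
  induction hn : #G.edgeFinset using Nat.strong_induction_on generalizing G M with
  | _ n ih =>
  subst hn
  by_cases hcov : ∃ v, ∀ N, IsMaximumMatchingSet G N → v ∈ vertexSupport N
  · obtain ⟨v, hv⟩ := hcov
    obtain ⟨N, hN⟩ := exists_isMaximumMatchingSet (G.deleteIncidenceSet v)
    have hdegv : 0 < G.degree v := by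
      obtain ⟨e, he, hve⟩ := mem_vertexSupport.1 (hv M hM)
      obtain ⟨w, rfl⟩ := Sym2.mem_iff_exists.1 hve
      exact (G.degree_pos_iff_exists_adj v).2 ⟨w, hM.1.1 he⟩
    have hcard := G.card_edgeFinset_deleteIncidenceSet v
    have hle := G.degree_le_card_edgeFinset v
    have hN' := ih _ (by omega)
      (fun w ↦ (degree_le_of_le (G.deleteIncidenceSet_le v)).trans (hdeg w)) hN rfl
    have := hM.degree_add_chvatalHansonBound_le hv (hdeg v) hN
    omega
  push Not at hcov
  obtain hE | ⟨e, he⟩ := G.edgeFinset.eq_empty_or_nonempty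
  · simp [hE]
  obtain ⟨a, b, rfl⟩ : ∃ a b, e = s(a, b) := ⟨e.out.1, e.out.2, e.out_eq.symm⟩
  set C := univ.filter (G.Reachable a)
  have hCadj (x y : V) (hxy : G.Adj x y) (hx : x ∈ C) : y ∈ C := by
    simp only [C, mem_filter, mem_univ, true_and] at hx ⊢
    exact hx.trans hxy.reachable
  have hC : ∀ x ∈ C, ∀ y ∈ C, G.Reachable x y := by
    simp only [C, mem_filter, mem_univ, true_and]
    exact fun x hx y hy ↦ hx.symm.trans hy
  set H := (G.induce (C : Set V)).spanningCoe
  have hH (x y : V) : H.Adj x y ↔ G.Adj x y ∧ x ∈ C ∧ y ∈ C := by simp [H]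
  have hHpos : 0 < #H.edgeFinset := by
    have haC : a ∈ C := by simp [C]
    have hab : G.Adj a b := mem_edgeFinset.1 he
    exact card_pos.2 ⟨s(a, b), mem_edgeFinset.2 ((hH a b).2 ⟨hab, haC, hCadj a b hab haC⟩)⟩
  have hsplit := card_edgeFinset_sdiff_add_card_edgeFinset (H := H) (G.spanningCoe_induce_le _)
  have hlt : #(G \ H).edgeFinset < #G.edgeFinset := by omega
  obtain ⟨N, hN⟩ := exists_isMaximumMatchingSet (G \ H)
  have hN' := ih _ hlt (fun w ↦ (degree_le_of_le sdiff_le).trans (hdeg w)) hN (by convert rfl)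
  have := hM.card_edgeFinset_add_chvatalHansonBound_le hcov hdeg hC hCadj hH hN
  omega

end EdgeCount

theorem stmt_1_general {V : Type*} [Fintype V] [DecidableEq V] (G : SimpleGraph V)
    (ν Δ : ℕ)
    (hmatch : ∀ M : Finset (Sym2 V), IsMatchingSet G M → M.card ≤ ν)
    (hdeg : ∀ v : V, (G.neighborSet v).ncard ≤ Δ) :
    G.edgeSet.ncard ≤ Δ * ν + (Δ / 2) * (ν / ((Δ + 1) / 2)) ∧
      G.edgeSet.ncard ≤ Δ * ν + ν := by
  classical
  obtain ⟨M, hM⟩ := exists_isMaximumMatchingSet G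
  have hdeg' (v : V) : G.degree v ≤ Δ := by
    rw [← card_neighborSet_eq_degree, ← Nat.card_eq_fintype_card, Nat.card_coe_set_eq]
    exact hdeg v
  have hbound : G.edgeSet.ncard ≤ chvatalHansonBound Δ ν := by
    rw [← coe_edgeFinset, Set.ncard_coe_finset]
    exact (hM.card_edgeFinset_le_chvatalHansonBound hdeg').trans
      (chvatalHansonBound_mono Δ (hmatch M hM.1))
  exact ⟨hbound, hbound.trans (chvatalHansonBound_le Δ ν)⟩

/-- Chvátal–Hanson: a graph with matching number at most `ν` and maximum degree at most `Δ`
has at most `Δν + ⌊Δ/2⌋⌊ν/⌈Δ/2⌉⌋ ≤ Δν + ν` edges. -/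
theorem stmt_1 {V : Type*} [Fintype V] [DecidableEq V] (G : SimpleGraph V)
    (ν Δ : ℕ) (hν : 1 ≤ ν) (hΔ : 1 ≤ Δ)
    (hmatch : ∀ M : Finset (Sym2 V), IsMatchingSet G M → M.card ≤ ν)
    (hdeg : ∀ v : V, (G.neighborSet v).ncard ≤ Δ) :
    G.edgeSet.ncard ≤ Δ * ν + (Δ / 2) * (ν / ((Δ + 1) / 2)) ∧
      G.edgeSet.ncard ≤ Δ * ν + ν :=
  stmt_1_general G ν Δ hmatch hdeg
end

section
/- Let G be a graph on n vertices with a vertex partition V(G) = V_1 ∪ ... ∪ V_r such that e(G) ≥ (r−1)n²/(2r) − 2εn² and Σᵢ e(G[Vᵢ]) ≤ εn², where ε > 0. Then for every i, | |V_i| − n/r | < 3√ε · n. -/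
/-!
Counting ordered pairs of vertices gives `2 e(G) + ∑ |V_i|² ≤ n² + 2 ∑ e(G[V_i])`, so the
hypotheses force `r ∑ |V_i|² - n² ≤ 6 ε r n²`: the part sizes have small variance. A Cauchy–Schwarz
bound on the `r - 1` parts other than `V_i` turns this into `(n - r |V_i|)² ≤ 6 ε r (r - 1) n²`,
which is less than `(3 √ε r n)²`.
-/

open Finset

theorem Finset.sq_sum_sub_card_mul_le {ι : Type*} [Fintype ι] [DecidableEq ι] (a : ι → ℝ)
    (i : ι) :
    (∑ j, a j - Fintype.card ι * a i) ^ 2 ≤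
      (Fintype.card ι - 1) * (Fintype.card ι * ∑ j, a j ^ 2 - (∑ j, a j) ^ 2) := by
  have hcard : ((univ.erase i).card : ℝ) = Fintype.card ι - 1 := by
    rw [card_erase_of_mem (mem_univ i), card_univ, Nat.cast_sub (Fintype.card_pos_iff.2 ⟨i⟩),
      Nat.cast_one]
  have hcs := sq_sum_le_card_mul_sum_sq (s := univ.erase i) (f := a)
  rw [hcard, sum_erase_eq_sub (mem_univ i), sum_erase_eq_sub (mem_univ i)] at hcs
  nlinarith [hcs]

theorem Finset.card_sameFiber_pairs_eq_sum_sq {V ι : Type*} [Fintype V] [Fintype ι] [DecidableEq ι]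
    (f : V → ι) : #{p : V × V | f p.1 = f p.2} = ∑ i, #{v | f v = i} ^ 2 := by
  rw [card_eq_sum_card_fiberwise (f := fun p : V × V => f p.1) (t := univ)
    (fun _ _ => mem_univ _)]
  refine sum_congr rfl fun i _ => ?_
  rw [sq, ← card_product]
  congr 1
  ext ⟨u, v⟩
  simp only [mem_filter, mem_univ, true_and, mem_product]
  constructor
  · rintro ⟨huv, hu⟩; exact ⟨hu, huv ▸ hu⟩
  · rintro ⟨hu, hv⟩; exact ⟨hu.trans hv.symm, hu⟩

namespace SimpleGraph

variable {V : Type*} [Fintype V] (G : SimpleGraph V)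

theorem ncard_edgeSet_eq_card_edgeFinset [DecidableRel G.Adj] :
    G.edgeSet.ncard = #G.edgeFinset := by
  rw [← coe_edgeFinset, Set.ncard_coe_finset]

theorem card_darts_mem_le_two_mul [DecidableRel G.Adj] (s : Set V) [DecidablePred (· ∈ s)] :
    #{d : G.Dart | d.fst ∈ s ∧ d.snd ∈ s} ≤ 2 * (G.induce s).edgeSet.ncard := by
  classical
  rw [ncard_edgeSet_eq_card_edgeFinset, ← dart_card_eq_twice_card_edges, ← Fintype.card_subtype]
  refine Fintype.card_le_of_injective
    (fun d => ⟨(⟨d.1.fst, d.2.1⟩, ⟨d.1.snd, d.2.2⟩), d.1.adj⟩) ?_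
  rintro ⟨d₁, _⟩ ⟨d₂, _⟩ h
  simp only [Dart.ext_iff, Prod.ext_iff, Subtype.ext_iff] at h ⊢
  exact h

theorem two_mul_ncard_edgeSet_add_sum_sq_le {ι : Type*} [Fintype ι] [DecidableEq ι]
    (part : V → ι) :
    2 * G.edgeSet.ncard + ∑ i, #{v | part v = i} ^ 2 ≤
      Fintype.card V ^ 2 + 2 * ∑ i, (G.induce {v | part v = i}).edgeSet.ncard := by
  classical
  have hdarts : 2 * G.edgeSet.ncard =
      #{d : G.Dart | part d.fst = part d.snd} + #{d : G.Dart | part d.fst ≠ part d.snd} := by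
    rw [ncard_edgeSet_eq_card_edgeFinset, ← dart_card_eq_twice_card_edges, ← card_univ,
      card_filter_add_card_filter_not]
  have hsame : #{d : G.Dart | part d.fst = part d.snd} ≤
      2 * ∑ i, (G.induce {v | part v = i}).edgeSet.ncard := by
    rw [card_eq_sum_card_fiberwise (f := fun d : G.Dart => part d.fst) (t := univ)
      (fun _ _ => mem_univ _), mul_sum]
    refine sum_le_sum fun i _ => le_trans (card_le_card ?_) (G.card_darts_mem_le_two_mul _)
    intro d hd
    simp only [mem_filter, mem_univ, true_and, Set.mem_ofPred_eq] at hd ⊢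
    exact ⟨hd.2, hd.1 ▸ hd.2⟩
  have hdiff : #{d : G.Dart | part d.fst ≠ part d.snd} ≤ #{p : V × V | part p.1 ≠ part p.2} :=
    card_le_card_of_injOn Dart.toProd (fun d hd => by simpa using hd)
      (fun _ _ _ _ h => Dart.toProd_injective h)
  have hpairs : #{p : V × V | part p.1 ≠ part p.2} + ∑ i, #{v | part v = i} ^ 2 =
      Fintype.card V ^ 2 := by
    rw [← card_sameFiber_pairs_eq_sum_sq, add_comm, card_filter_add_card_filter_not, card_univ,
      Fintype.card_prod, sq]
  omega

end SimpleGraph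

theorem stmt_6_general {V : Type*} [Fintype V] (G : SimpleGraph V) (r : ℕ)
    (part : V → Fin r) (ε : ℝ) (hε : 0 < ε) (hn : 0 < Fintype.card V)
    (hbig : ((r : ℝ) - 1) * (Fintype.card V : ℝ) ^ 2 / (2 * r) -
        2 * ε * (Fintype.card V : ℝ) ^ 2 ≤ (G.edgeSet.ncard : ℝ))
    (hinside : (∑ i : Fin r, ((G.induce {v : V | part v = i}).edgeSet.ncard : ℝ)) ≤
        ε * (Fintype.card V : ℝ) ^ 2) :
    ∀ i : Fin r,
      |(({v : V | part v = i} : Set V).ncard : ℝ) - (Fintype.card V : ℝ) / r| <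
        3 * Real.sqrt ε * (Fintype.card V : ℝ) := by
  intro i
  set n : ℝ := (Fintype.card V : ℝ)
  set a : Fin r → ℝ := fun j => (#{v | part v = j} : ℝ)
  have hn0 : 0 < n := Nat.cast_pos.2 hn
  have hr : (1 : ℝ) ≤ r := Nat.one_le_cast.2 (Fin.pos i)
  have hsum : ∑ j, a j = n := by
    simp only [a, n]
    rw [← Nat.cast_sum, ← card_eq_sum_card_fiberwise (fun v _ => mem_univ (part v)), card_univ]
  have hcount := Nat.cast_le (α := ℝ) |>.2 (G.two_mul_ncard_edgeSet_add_sum_sq_le part)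
  push_cast at hcount
  change 2 * _ + ∑ j, a j ^ 2 ≤ n ^ 2 + _ at hcount
  have hvar : r * ∑ j, a j ^ 2 - n ^ 2 ≤ 6 * ε * r * n ^ 2 := by
    have hr0 : (0 : ℝ) ≤ r := by linarith
    have hq : (r : ℝ) * ((r - 1) * n ^ 2 / (2 * r)) = (r - 1) * n ^ 2 / 2 := by
      field_simp
    nlinarith [mul_le_mul_of_nonneg_left hbig hr0, mul_le_mul_of_nonneg_left hcount hr0,
      mul_le_mul_of_nonneg_left hinside hr0, hq]
  have hdev : (n - r * a i) ^ 2 < (3 * Real.sqrt ε * r * n) ^ 2 := by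
    have := Finset.sq_sum_sub_card_mul_le a i
    rw [Fintype.card_fin, hsum] at this
    rw [mul_pow, mul_pow, mul_pow, Real.sq_sqrt hε.le]
    nlinarith [mul_le_mul_of_nonneg_left hvar (by linarith : (0 : ℝ) ≤ r - 1),
      mul_pos (mul_pos hε (by linarith : (0 : ℝ) < r)) (pow_pos hn0 2)]
  have hncard : (({v : V | part v = i} : Set V).ncard : ℝ) = a i := by
    simp [a, Set.ncard_eq_toFinset_card']
  rw [hncard, show a i - n / r = -(n - r * a i) / r by field_simp; ring, abs_div, abs_neg,
    abs_of_pos (by linarith : (0 : ℝ) < r), div_lt_iff₀ (by linarith)]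
  linarith [abs_lt_of_sq_lt_sq hdev (by positivity)]

/-- If `G` has a vertex partition into `r` parts (fibers of `part`) with
`e(G) ≥ (r-1)n²/(2r) - 2εn²` and at most `εn²` edges inside parts, then every part
has size within `3√ε·n` of `n/r`. -/
theorem stmt_6 {V : Type*} [Fintype V] (G : SimpleGraph V) (r : ℕ) (hr : 2 ≤ r)
    (part : V → Fin r) (ε : ℝ) (hε : 0 < ε) (hn : 0 < Fintype.card V)
    (hbig : ((r : ℝ) - 1) * (Fintype.card V : ℝ) ^ 2 / (2 * r) -
        2 * ε * (Fintype.card V : ℝ) ^ 2 ≤ (G.edgeSet.ncard : ℝ))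
    (hinside : (∑ i : Fin r, ((G.induce {v : V | part v = i}).edgeSet.ncard : ℝ)) ≤
        ε * (Fintype.card V : ℝ) ^ 2) :
    ∀ i : Fin r,
      |(({v : V | part v = i} : Set V).ncard : ℝ) - (Fintype.card V : ℝ) / r| <
        3 * Real.sqrt ε * (Fintype.card V : ℝ) :=
  stmt_6_general G r part ε hε hn hbig hinside
end

section
/- Let G be a connected graph with spectral radius ρ and positive Perron eigenvector x with maximum entry 1. For any vertex v₀ and any subset W of vertices, ρ·x_{v₀} ≤ |W| + (d(v₀) − |W ∩ N(v₀)|)·x_{v₀} ≤ |W| + d(v₀)·x_{v₀} wherever x_{v₀} = max{x_u : u ∉ W}; consequently d(v₀) ≥ ρ + |W| − |W|/x_{v₀}. -/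
/-- The spectral radius of a finite simple graph: the largest eigenvalue (supremum of the
real spectrum) of its adjacency matrix. -/
noncomputable def specRad {V : Type*} [Fintype V] [DecidableEq V] (G : SimpleGraph V) : ℝ := by
  classical exact sSup (spectrum ℝ (SimpleGraph.adjMatrix ℝ G))

/-- For a connected graph with Perron eigenvector `x` (positive, max entry `1`), any set
`W` and vertex `v₀` maximizing `x` outside `W`:
`ρ·x_{v₀} ≤ |W| + (d(v₀) - |W ∩ N(v₀)|)·x_{v₀} ≤ |W| + d(v₀)·x_{v₀}`, and consequently
`d(v₀) ≥ ρ + |W| - |W|/x_{v₀}`. -/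
theorem stmt_10 {V : Type*} [Fintype V] [DecidableEq V] (G : SimpleGraph V)
    [DecidableRel G.Adj] (hconn : G.Connected) (x : V → ℝ)
    (heig : (SimpleGraph.adjMatrix ℝ G).mulVec x = specRad G • x)
    (hpos : ∀ v, 0 < x v) (hmax : ∀ v, x v ≤ 1)
    (W : Finset V) (v₀ : V) (hv₀ : v₀ ∉ W) (hv₀max : ∀ u, u ∉ W → x u ≤ x v₀) :
    (specRad G * x v₀ ≤ (W.card : ℝ) +
        ((G.degree v₀ : ℝ) - ((W ∩ G.neighborFinset v₀).card : ℝ)) * x v₀) ∧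
    ((W.card : ℝ) + ((G.degree v₀ : ℝ) - ((W ∩ G.neighborFinset v₀).card : ℝ)) * x v₀ ≤
        (W.card : ℝ) + (G.degree v₀ : ℝ) * x v₀) ∧
    ((G.degree v₀ : ℝ) ≥ specRad G + (W.card : ℝ) - (W.card : ℝ) / x v₀) := by
  classical
  set ρ := specRad G with hρ
  set N := G.neighborFinset v₀ with hNdef
  have hx0 : 0 < x v₀ := hpos v₀
  have hx1 : x v₀ ≤ 1 := hmax v₀
  have hWN : ((W ∩ N).card : ℝ) = ((N ∩ W).card : ℝ) := by rw [Finset.inter_comm]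
  set k : ℝ := ((N ∩ W).card : ℝ) with hkdef
  set d : ℝ := (G.degree v₀ : ℝ) with hddef
  have hdN : d = (N.card : ℝ) := by
    rw [hddef, hNdef, SimpleGraph.card_neighborFinset_eq_degree]
  have hsum : ρ * x v₀ = ∑ u ∈ N, x u := by
    have h := congrFun heig v₀
    rw [SimpleGraph.adjMatrix_mulVec_apply] at h
    simpa [Pi.smul_apply, smul_eq_mul] using h.symm
  have hsplit : ∑ u ∈ N, x u = ∑ u ∈ N ∩ W, x u + ∑ u ∈ N \ W, x u :=
    (Finset.sum_inter_add_sum_sdiff N W x).symm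
  have h1 : ∑ u ∈ N ∩ W, x u ≤ k := by
    calc ∑ u ∈ N ∩ W, x u ≤ ∑ u ∈ N ∩ W, (1:ℝ) :=
          Finset.sum_le_sum fun u _ => hmax u
      _ = k := by simp [hkdef]
  have h2 : ∑ u ∈ N \ W, x u ≤ ((N \ W).card : ℝ) * x v₀ := by
    calc ∑ u ∈ N \ W, x u ≤ ∑ u ∈ N \ W, x v₀ :=
          Finset.sum_le_sum fun u hu => hv₀max u (Finset.mem_sdiff.mp hu).2
      _ = _ := by rw [Finset.sum_const, nsmul_eq_mul]
  have hcard : ((N \ W).card : ℝ) = d - k := by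
    have h := Finset.card_inter_add_card_sdiff N W
    have hle : (N ∩ W).card ≤ N.card := Finset.card_le_card Finset.inter_subset_left
    rw [hdN, hkdef, (by omega : (N \ W).card = N.card - (N ∩ W).card), Nat.cast_sub hle]
  have hkey : ρ * x v₀ ≤ k + (d - k) * x v₀ := by
    rw [hsum, hsplit, ← hcard]
    linarith
  have hk : k ≤ (W.card : ℝ) := by
    rw [hkdef]
    exact_mod_cast Finset.card_le_card (Finset.inter_subset_right)
  have hk0 : 0 ≤ k := by positivity
  refine ⟨?_, ?_, ?_⟩
  · rw [hWN]; linarith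
  · rw [hWN]; nlinarith
  · have h4 : ρ * x v₀ + (W.card : ℝ) * x v₀ - (W.card : ℝ) ≤ d * x v₀ := by
      nlinarith [mul_le_mul_of_nonneg_right hk (by linarith : (0:ℝ) ≤ 1 - x v₀)]
    have h5 : (ρ + (W.card : ℝ) - (W.card : ℝ) / x v₀) * x v₀ ≤ d * x v₀ := by
      have heq : (ρ + (W.card : ℝ) - (W.card : ℝ) / x v₀) * x v₀ =
          ρ * x v₀ + (W.card : ℝ) * x v₀ - (W.card : ℝ) := by
        field_simp
      linarith [heq ▸ h4]
    exact le_of_mul_le_mul_right h5 hx0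
end

section
/- For n sufficiently large relative to k and r (with k, r ≥ 2), the spectral radius of the graph K_{k−1} ∨ T_{n−k+1,r} is at least (r−1)n/r + 2(k−1)/r − (1/n)·( (k−1)(r+k−1)/r + r/2 ). -/
/-!
Testing the Rayleigh quotient of the adjacency matrix on the all-ones vector gives
`ρ(G) ≥ 2 e(G) / |V(G)|`. With `t = k - 1` and `m = n - t`, the join `K_t ∨ T_{m,r}` has
`t(t-1)/2 + t m + e(T_{m,r})` edges, and the exact Turán count
`2 e(T_{m,r}) = (r-1) m² / r - s (r - s) / r` (`s = m mod r`) is at least `(r-1) m² / r - r / 4`.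
Dividing by `n = t + m` gives the bound with `r / (4n)` to spare.
-/

/-- The join of two graphs: all vertices of `G` are joined to all vertices of `H`. -/
def graphJoin {α β : Type*} (G : SimpleGraph α) (H : SimpleGraph β) : SimpleGraph (α ⊕ β) where
  Adj x y :=
    match x, y with
    | Sum.inl a, Sum.inl b => G.Adj a b
    | Sum.inl _, Sum.inr _ => True
    | Sum.inr _, Sum.inl _ => True
    | Sum.inr a, Sum.inr b => H.Adj a b
  symm := by
    constructor
    rintro (a | a) (b | b) h <;> simp_all
    · exact h.symm
    · exact h.symm
  loopless := by
    constructor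
    rintro (a | a) h
    · exact G.loopless.irrefl a h
    · exact H.loopless.irrefl a h

/-- The number of edges of a graph. -/
noncomputable def numEdges {V : Type*} (G : SimpleGraph V) : ℕ := G.edgeSet.ncard

open Finset SimpleGraph Matrix

theorem Matrix.IsHermitian.dotProduct_mulVec_le_sSup_spectrum_mul {n : Type*} [Fintype n]
    [DecidableEq n] {A : Matrix n n ℝ} (hA : A.IsHermitian) (x : n → ℝ) :
    x ⬝ᵥ A *ᵥ x ≤ sSup (spectrum ℝ A) * (x ⬝ᵥ x) := by
  set c := sSup (spectrum ℝ A)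
  have hB : (algebraMap ℝ _ c - A).IsHermitian := by
    rw [Algebra.algebraMap_eq_smul_one]
    exact (isHermitian_one.smul (IsSelfAdjoint.all c)).sub hA
  have hpsd : (algebraMap ℝ _ c - A).PosSemidef := by
    refine hB.posSemidef_iff_eigenvalues_nonneg.mpr fun i => ?_
    have hi := hB.eigenvalues_mem_spectrum_real i
    rw [← spectrum.singleton_sub_eq] at hi
    obtain ⟨_, rfl, μ, hμ, hi⟩ := hi
    rw [← hi]
    exact sub_nonneg.mpr (le_csSup A.finite_real_spectrum.bddAbove hμ)
  have := hpsd.dotProduct_mulVec_nonneg x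
  rw [Algebra.algebraMap_eq_smul_one, sub_mulVec, smul_mulVec, one_mulVec, dotProduct_sub,
    dotProduct_smul] at this
  simpa [sub_nonneg, mul_comm] using this

theorem two_mul_card_edgeFinset_le_specRad_mul {V : Type*} [Fintype V] [DecidableEq V]
    (G : SimpleGraph V) [DecidableRel G.Adj] :
    (2 * #G.edgeFinset : ℝ) ≤ specRad G * Fintype.card V := by
  have hspec : specRad G = sSup (spectrum ℝ (G.adjMatrix ℝ)) := by
    unfold specRad; congr!
  have hA : (G.adjMatrix ℝ).IsHermitian := G.isSymm_adjMatrix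
  convert hA.dotProduct_mulVec_le_sSup_spectrum_mul (Function.const V 1) using 1
  · simp only [dotProduct, adjMatrix_mulVec_const_apply, Function.const_apply, mul_one, one_mul]
    exact_mod_cast (sum_degrees_eq_twice_card_edges G).symm
  · simp [hspec, dotProduct]

section graphJoin

variable {α β : Type*} (G : SimpleGraph α) (H : SimpleGraph β)

@[simp] theorem graphJoin_adj_inl_inl {a b : α} :
    (graphJoin G H).Adj (.inl a) (.inl b) ↔ G.Adj a b := Iff.rfl

@[simp] theorem graphJoin_adj_inl_inr {a : α} {b : β} : (graphJoin G H).Adj (.inl a) (.inr b) :=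
  trivial

@[simp] theorem graphJoin_adj_inr_inl {a : α} {b : β} : (graphJoin G H).Adj (.inr b) (.inl a) :=
  trivial

@[simp] theorem graphJoin_adj_inr_inr {a b : β} :
    (graphJoin G H).Adj (.inr a) (.inr b) ↔ H.Adj a b := Iff.rfl

instance [DecidableRel G.Adj] [DecidableRel H.Adj] : DecidableRel (graphJoin G H).Adj
  | .inl a, .inl b => decidable_of_iff _ (graphJoin_adj_inl_inl G H (a := a) (b := b)).symm
  | .inl _, .inr _ => isTrue trivial
  | .inr _, .inl _ => isTrue trivial
  | .inr a, .inr b => decidable_of_iff _ (graphJoin_adj_inr_inr G H (a := a) (b := b)).symm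

variable [Fintype α] [Fintype β] [DecidableRel G.Adj] [DecidableRel H.Adj]

theorem degree_graphJoin_inl (a : α) :
    (graphJoin G H).degree (.inl a) = G.degree a + Fintype.card β := by
  have : (graphJoin G H).neighborFinset (.inl a) = (G.neighborFinset a).disjSum univ := by
    ext (b | b) <;> simp
  rw [← card_neighborFinset_eq_degree, this, card_disjSum, card_univ,
    card_neighborFinset_eq_degree]

theorem degree_graphJoin_inr (b : β) :
    (graphJoin G H).degree (.inr b) = Fintype.card α + H.degree b := by
  have : (graphJoin G H).neighborFinset (.inr b) = univ.disjSum (H.neighborFinset b) := by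
    ext (a | a) <;> simp
  rw [← card_neighborFinset_eq_degree, this, card_disjSum, card_univ,
    card_neighborFinset_eq_degree]

theorem card_edgeFinset_graphJoin :
    #(graphJoin G H).edgeFinset =
      #G.edgeFinset + #H.edgeFinset + Fintype.card α * Fintype.card β := by
  refine Nat.eq_of_mul_eq_mul_left two_pos ?_
  rw [← sum_degrees_eq_twice_card_edges, mul_add, mul_add, ← sum_degrees_eq_twice_card_edges,
    ← sum_degrees_eq_twice_card_edges, Fintype.sum_sum_type]
  simp only [degree_graphJoin_inl, degree_graphJoin_inr, sum_add_distrib, sum_const, card_univ,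
    smul_eq_mul]
  ring

end graphJoin

theorem two_mul_card_edgeFinset_turanGraph (n r : ℕ) (hr : 0 < r) :
    (2 * #(turanGraph n r).edgeFinset : ℝ) =
      ((r : ℝ) - 1) * n ^ 2 / r - (n % r : ℕ) * (r - (n % r : ℕ)) / r := by
  obtain ⟨q, s, hs, rfl⟩ : ∃ q s, s < r ∧ n = q * r + s :=
    ⟨n / r, n % r, Nat.mod_lt n hr, by rw [mul_comm, Nat.div_add_mod]⟩
  have hmod : (q * r + s) % r = s := by simp [Nat.add_mod, Nat.mod_eq_of_lt hs]
  have hsub : (q * r + s) ^ 2 - s ^ 2 = r * (q * (q * r + 2 * s)) := by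
    apply Nat.sub_eq_of_eq_add; ring
  -- Mathlib's count divides in `ℕ`; the division is exact, so it survives the cast to `ℝ`.
  have hdvd : 2 * r ∣ ((q * r + s) ^ 2 - s ^ 2) * (r - 1) := by
    rw [hsub, mul_assoc, mul_comm 2 r]
    refine mul_dvd_mul_left r (Even.two_dvd ?_)
    have hsplit :
        q * (q * r + 2 * s) * (r - 1) = q ^ 2 * (r * (r - 1)) + 2 * (q * s * (r - 1)) := by
      ring
    rw [hsplit]
    exact (Nat.even_mul_pred_self r).mul_left _ |>.add (even_two_mul _)
  rw [card_edgeFinset_turanGraph, hmod, Nat.cast_add, Nat.cast_div hdvd (by positivity),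
    Nat.cast_choose_two, Nat.cast_mul, Nat.cast_sub (by nlinarith), Nat.cast_sub hr]
  push_cast
  field_simp
  ring

theorem mul_sq_div_sub_le_two_mul_card_edgeFinset_turanGraph (n r : ℕ) (hr : 0 < r) :
    ((r : ℝ) - 1) * n ^ 2 / r - r / 4 ≤ 2 * #(turanGraph n r).edgeFinset := by
  rw [two_mul_card_edgeFinset_turanGraph n r hr]
  have hr' : (0 : ℝ) < r := by exact_mod_cast hr
  have hs : ((n % r : ℕ) : ℝ) * (r - (n % r : ℕ)) / r ≤ r / 4 := by
    rw [div_le_div_iff₀ hr' four_pos]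
    nlinarith [sq_nonneg (2 * ((n % r : ℕ) : ℝ) - r)]
  linarith

/-- For `k, r ≥ 2` and `n` sufficiently large,
`ρ(K_{k-1} ∨ T_{n-k+1,r}) ≥ (r-1)n/r + 2(k-1)/r - (1/n)((k-1)(r+k-1)/r + r/2)`. -/
theorem stmt_12 (k r : ℕ) (hk : 2 ≤ k) (hr : 2 ≤ r) :
    ∃ N : ℕ, ∀ n : ℕ, N ≤ n →
      specRad (graphJoin (SimpleGraph.completeGraph (Fin (k - 1))) (SimpleGraph.turanGraph (n - k + 1) r)) ≥
        ((r : ℝ) - 1) * n / r + 2 * ((k : ℝ) - 1) / r -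
          (1 / (n : ℝ)) * (((k : ℝ) - 1) * ((r : ℝ) + (k : ℝ) - 1) / r + (r : ℝ) / 2) := by
  refine ⟨k, fun n hn => ?_⟩
  obtain ⟨t, rfl⟩ : ∃ t, k = t + 1 := ⟨k - 1, by omega⟩
  obtain ⟨m, rfl⟩ : ∃ m, n = t + m := ⟨n - t, by omega⟩
  rw [show t + 1 - 1 = t by omega, show t + m - (t + 1) + 1 = m by omega]
  have hspec := two_mul_card_edgeFinset_le_specRad_mul
    (graphJoin (completeGraph (Fin t)) (turanGraph m r))
  have hturan := mul_sq_div_sub_le_two_mul_card_edgeFinset_turanGraph m r (by omega)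
  have hclique : (#(completeGraph (Fin t)).edgeFinset : ℝ) = t * (t - 1) / 2 := by
    rw [card_edgeFinset_top_eq_card_choose_two, Nat.cast_choose_two, Fintype.card_fin]
  simp only [card_edgeFinset_graphJoin, Nat.cast_add, Nat.cast_mul, hclique, Fintype.card_sum,
    Fintype.card_fin] at hspec
  have hn : (0 : ℝ) < t + m := by exact_mod_cast (by omega : 0 < t + m)
  have hr' : (0 : ℝ) < r := by exact_mod_cast (by omega : 0 < r)
  push_cast
  rw [ge_iff_le, ← mul_le_mul_iff_of_pos_right hn]
  have hscaled : (((r : ℝ) - 1) * (t + m) / r + 2 * (t + 1 - 1) / r -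
      1 / (t + m) * ((t + 1 - 1) * (r + (t + 1) - 1) / r + r / 2)) * (t + m) + r / 4 =
      t * (t - 1) + (r - 1) * m ^ 2 / r - r / 4 + 2 * (t * m) := by
    field_simp; ring
  linarith
end
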